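/- arXiv:2404.12878 — 3 statements merged into one kernel-verified Lean document; each statement's English description precedes it below -/
import Mathlib

section
/- Let A : ℝ → ℝ be continuous with compact support and A ≥ 0, and suppose A(q₀) > 0 for some q₀. Define U(s,q) = ∫_{-∞}^{q} 2A(ρ)/(A(ρ)·s + 2) dρ for s ≥ 0. Then for every q > q₀ there exists a constant c > 0 (depending on q₀ and A but not on s) such that U(s,q) ≥ c/(1+s) for all s ≥ 0. -/
open MeasureTheory

/-- For `A` continuous, compactly supported, nonnegative, with `A q₀ > 0`, the solution
`U(s,q) = ∫_{-∞}^q 2A(ρ)/(A(ρ)s+2) dρ` of Hörmander's asymptotic equation satisfies,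
for each `q > q₀`, a lower bound `U(s,q) ≥ c/(1+s)` uniformly in `s ≥ 0`. -/
theorem stmt3 (A : ℝ → ℝ) (hA : Continuous A) (hsupp : HasCompactSupport A)
    (hpos : ∀ q, 0 ≤ A q) (q₀ : ℝ) (hq₀ : 0 < A q₀) :
    ∀ q : ℝ, q₀ < q → ∃ c : ℝ, 0 < c ∧ ∀ s : ℝ, 0 ≤ s →
      c / (1 + s) ≤ ∫ ρ in Set.Iio q, 2 * A ρ / (A ρ * s + 2) := by
  intro q hq
  obtain ⟨x₀, hx₀⟩ := hA.exists_forall_ge_of_hasCompactSupport hsupp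
  set M := A x₀ with hMdef
  have hM : ∀ ρ, A ρ ≤ M := hx₀
  have hMpos : 0 < M := lt_of_lt_of_le hq₀ (hM q₀)
  have hAint : Integrable A := hA.integrable_of_hasCompactSupport hsupp
  have hIOn : IntegrableOn A (Set.Iio q) := hAint.integrableOn
  have hIpos : 0 < ∫ ρ in Set.Iio q, A ρ := by
    rw [setIntegral_pos_iff_support_of_nonneg_ae
      (Filter.Eventually.of_forall fun x => hpos x) hIOn]
    have hopen : IsOpen (Function.support A ∩ Set.Iio q) :=
      ((isOpen_compl_singleton.preimage hA)).inter isOpen_Iio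
    have hne : (Function.support A ∩ Set.Iio q).Nonempty :=
      ⟨q₀, by simp [Function.mem_support, ne_of_gt hq₀, hq]⟩
    exact hopen.measure_pos _ hne
  set I := ∫ ρ in Set.Iio q, A ρ with hI
  refine ⟨2 * I / (M + 2), by positivity, fun s hs => ?_⟩
  have hfint : Integrable (fun ρ => 2 * A ρ / (A ρ * s + 2)) := by
    have hden : ∀ ρ, A ρ * s + 2 ≠ 0 := fun ρ => by nlinarith [hpos ρ]
    have hc : Continuous fun ρ => 2 * A ρ / (A ρ * s + 2) :=
      (continuous_const.mul hA).div (by continuity) hden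
    have hcs : HasCompactSupport fun ρ => 2 * A ρ / (A ρ * s + 2) := by
      apply hsupp.mono
      intro x hx
      simp only [Function.mem_support, ne_eq] at hx ⊢
      intro h; apply hx; simp [h]
    exact hc.integrable_of_hasCompactSupport hcs
  have key : ∀ ρ ∈ Set.Iio q, 2 / ((M + 2) * (1 + s)) * A ρ ≤ 2 * A ρ / (A ρ * s + 2) := by
    intro ρ _
    have h1 : 0 < A ρ * s + 2 := by nlinarith [hpos ρ]
    have h2 : A ρ * s + 2 ≤ (M + 2) * (1 + s) := by nlinarith [hM ρ, hpos ρ]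
    have hle : 2 * A ρ / ((M + 2) * (1 + s)) ≤ 2 * A ρ / (A ρ * s + 2) :=
      div_le_div_of_nonneg_left (by nlinarith [hpos ρ]) h1 h2
    calc 2 / ((M + 2) * (1 + s)) * A ρ = 2 * A ρ / ((M + 2) * (1 + s)) := by ring
      _ ≤ 2 * A ρ / (A ρ * s + 2) := hle
  have hmono : ∫ ρ in Set.Iio q, 2 / ((M + 2) * (1 + s)) * A ρ
      ≤ ∫ ρ in Set.Iio q, 2 * A ρ / (A ρ * s + 2) :=
    setIntegral_mono_on (hIOn.const_mul _) hfint.integrableOn measurableSet_Iio key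
  have heq : ∫ ρ in Set.Iio q, 2 / ((M + 2) * (1 + s)) * A ρ
      = 2 / ((M + 2) * (1 + s)) * I := by
    rw [integral_const_mul]
  have : 2 * I / (M + 2) / (1 + s) = 2 / ((M + 2) * (1 + s)) * I := by
    field_simp
  rw [this]
  exact heq ▸ hmono
end

section
/- Let A : ℝ → ℝ be measurable with 0 ≤ A(q) ≤ ⟨q⟩^{-γ} for all q, where γ > 1 and ⟨q⟩ = (1+q²)^{1/2}. Then there is a constant C = C(γ) such that for all s ≥ 0, ∫_{-∞}^{∞} 2A(p)/(A(p)s + 2) dp ≤ C·(1+s)^{-(1−1/γ)}. -/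
/-!
Since `0 ≤ A ≤ 1`, the integrand `2A/(As+2)` is at most `min (2/(s+2)) ⟨p⟩^{-γ}`. Split
the integral of this majorant at `|p| = R := (1+s)^{1/γ}`: the first term bounds the part
over `[-R, R]` by `4R/(s+2) ≤ 4(1+s)^{1/γ-1}`, and `⟨p⟩^{-γ} ≤ |p|^{-γ}` bounds the two tails
by `2R^{1-γ}/(γ-1) = 2(1+s)^{1/γ-1}/(γ-1)`. This choice of `R` makes both parts of the same
order.
-/

open MeasureTheory Set

lemma two_mul_div_mul_add_two_le_min {a s : ℝ} (ha₀ : 0 ≤ a) (ha₁ : a ≤ 1) (hs : 0 ≤ s) :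
    2 * a / (a * s + 2) ≤ min (2 / (s + 2)) a := by
  have hd : 0 < a * s + 2 := by positivity
  refine le_min ?_ ?_
  · rw [div_le_div_iff₀ hd (by positivity)]
    nlinarith
  · rw [div_le_iff₀ hd]
    nlinarith [mul_nonneg (mul_nonneg ha₀ ha₀) hs]

lemma sqrt_one_add_sq_rpow_neg_le_one (p : ℝ) {γ : ℝ} (hγ : 0 ≤ γ) :
    √(1 + p ^ 2) ^ (-γ) ≤ 1 :=
  Real.rpow_le_one_of_one_le_of_nonpos (Real.one_le_sqrt.mpr (by nlinarith)) (by linarith)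

lemma sqrt_one_add_sq_rpow_neg_le_abs_rpow_neg {p : ℝ} (hp : p ≠ 0) {γ : ℝ} (hγ : 0 ≤ γ) :
    √(1 + p ^ 2) ^ (-γ) ≤ |p| ^ (-γ) :=
  Real.rpow_le_rpow_of_nonpos (abs_pos.mpr hp) (Real.abs_le_sqrt (by linarith)) (by linarith)

lemma integrable_sqrt_one_add_norm_sq_rpow_neg {E : Type*} [NormedAddCommGroup E]
    [NormedSpace ℝ E] [FiniteDimensional ℝ E] [MeasurableSpace E] [BorelSpace E]
    {μ : Measure E} [μ.IsAddHaarMeasure] {γ : ℝ} (hγ : Module.finrank ℝ E < γ) :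
    Integrable (fun x : E ↦ √(1 + ‖x‖ ^ 2) ^ (-γ)) μ := by
  refine (integrable_rpow_neg_one_add_norm_sq hγ).congr
    (Filter.Eventually.of_forall fun x ↦ ?_)
  dsimp only
  rw [Real.sqrt_eq_rpow, ← Real.rpow_mul (by positivity)]
  ring_nf

lemma setIntegral_Ioi_le_of_le_rpow_neg {f : ℝ → ℝ} {γ R : ℝ} (hγ : 1 < γ) (hR : 0 < R)
    (hf : IntegrableOn f (Ioi R)) (hle : ∀ p > R, f p ≤ p ^ (-γ)) :
    ∫ p in Ioi R, f p ≤ R ^ (1 - γ) / (γ - 1) := by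
  calc ∫ p in Ioi R, f p
      ≤ ∫ p in Ioi R, p ^ (-γ) :=
        setIntegral_mono_on hf (integrableOn_Ioi_rpow_of_lt (by linarith) hR) measurableSet_Ioi hle
    _ = R ^ (1 - γ) / (γ - 1) := by
        rw [integral_Ioi_rpow_of_lt (by linarith) hR, ← neg_div_neg_eq]
        ring_nf

lemma setIntegral_compl_Icc_le_of_le_abs_rpow_neg {f : ℝ → ℝ} {γ R : ℝ} (hγ : 1 < γ)
    (hR : 0 < R) (hf : Integrable f) (hle : ∀ p, R < |p| → f p ≤ |p| ^ (-γ)) :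
    ∫ p in (Icc (-R) R)ᶜ, f p ≤ 2 * (R ^ (1 - γ) / (γ - 1)) := by
  have hcompl : (Icc (-R) R)ᶜ = Iio (-R) ∪ Ioi R := by
    ext p
    simp only [mem_compl_iff, mem_Icc, mem_union, mem_Iio, mem_Ioi, not_and_or, not_le]
  have hdisj : Disjoint (Iio (-R)) (Ioi R) :=
    (Iic_disjoint_Ioi (by linarith)).mono_left Iio_subset_Iic_self
  have hleft : ∫ p in Iio (-R), f p = ∫ p in Ioi R, f (-p) := by
    rw [integral_comp_neg_Ioi, integral_Iic_eq_integral_Iio]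
  have hright_le := setIntegral_Ioi_le_of_le_rpow_neg hγ hR hf.integrableOn fun p hp ↦ by
    simpa [abs_of_pos (hR.trans hp)] using hle p (by rwa [abs_of_pos (hR.trans hp)])
  have hleft_le := setIntegral_Ioi_le_of_le_rpow_neg hγ hR hf.comp_neg.integrableOn fun p hp ↦ by
    simpa [abs_of_pos (hR.trans hp)] using hle (-p) (by rwa [abs_neg, abs_of_pos (hR.trans hp)])
  rw [hcompl, setIntegral_union hdisj measurableSet_Ioi hf.integrableOn hf.integrableOn, hleft]
  linarith

lemma integrable_min_sqrt_one_add_sq_rpow_neg {c γ : ℝ} (hc : 0 ≤ c) (hγ : 1 < γ) :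
    Integrable fun p : ℝ ↦ min c (√(1 + p ^ 2) ^ (-γ)) := by
  have hw : Integrable fun p : ℝ ↦ √(1 + p ^ 2) ^ (-γ) := by
    simpa using integrable_sqrt_one_add_norm_sq_rpow_neg (E := ℝ) (μ := volume) (by simpa using hγ)
  refine hw.mono (aestronglyMeasurable_const.inf hw.1) (Filter.Eventually.of_forall fun p ↦ ?_)
  have hw₀ : 0 ≤ √(1 + p ^ 2) ^ (-γ) := by positivity
  rw [Real.norm_eq_abs, Real.norm_eq_abs, abs_of_nonneg (le_min hc hw₀), abs_of_nonneg hw₀]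
  exact min_le_right _ _

lemma rpow_one_div_div_self {x : ℝ} (hx : 0 < x) (γ : ℝ) :
    x ^ (1 / γ) / x = x ^ (-(1 - 1 / γ)) := by
  rw [neg_sub, Real.rpow_sub hx, Real.rpow_one]

lemma rpow_one_div_rpow_one_sub {x γ : ℝ} (hx : 0 < x) (hγ : γ ≠ 0) :
    (x ^ (1 / γ)) ^ (1 - γ) = x ^ (-(1 - 1 / γ)) := by
  rw [← Real.rpow_mul hx.le]
  congr 1
  field_simp
  ring

lemma integral_min_sqrt_one_add_sq_rpow_neg_le {γ s : ℝ} (hγ : 1 < γ) (hs : 0 ≤ s) :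
    ∫ p, min (2 / (s + 2)) (√(1 + p ^ 2) ^ (-γ))
      ≤ (4 + 2 / (γ - 1)) * (1 + s) ^ (-(1 - 1 / γ)) := by
  set g : ℝ → ℝ := fun p ↦ min (2 / (s + 2)) (√(1 + p ^ 2) ^ (-γ))
  set R := (1 + s) ^ (1 / γ) with hR_def
  have hR : 0 < R := by positivity
  have hg : Integrable g := integrable_min_sqrt_one_add_sq_rpow_neg (by positivity) hγ
  have hg_nonneg : ∀ p, 0 ≤ g p := fun p ↦ le_min (by positivity) (by positivity)
  have hinner : ∫ p in Icc (-R) R, g p ≤ 2 * R * (2 / (s + 2)) := by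
    have := norm_setIntegral_le_of_norm_le_const (μ := volume) (f := g)
      (measure_Icc_lt_top (a := -R) (b := R))
      fun p _ ↦ by
        rw [Real.norm_eq_abs, abs_of_nonneg (hg_nonneg p)]
        exact min_le_left _ _
    rw [Real.volume_real_Icc_of_le (by linarith), Real.norm_eq_abs] at this
    linarith [le_abs_self (∫ p in Icc (-R) R, g p)]
  have houter := setIntegral_compl_Icc_le_of_le_abs_rpow_neg hγ hR hg fun p hp ↦
    (min_le_right _ _).trans
      (sqrt_one_add_sq_rpow_neg_le_abs_rpow_neg (abs_pos.mp (hR.trans hp)) (by linarith))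
  rw [hR_def, rpow_one_div_rpow_one_sub (by linarith) (by linarith), ← hR_def] at houter
  have hRc : R * (2 / (s + 2)) ≤ 2 * (1 + s) ^ (-(1 - 1 / γ)) :=
    calc R * (2 / (s + 2)) = 2 * (R / (s + 2)) := by ring
      _ ≤ 2 * (R / (1 + s)) := by
        gcongr 2 * ?_
        exact div_le_div_of_nonneg_left hR.le (by positivity) (by linarith)
      _ = 2 * (1 + s) ^ (-(1 - 1 / γ)) := by rw [rpow_one_div_div_self (by linarith)]
  rw [← integral_add_compl (s := Icc (-R) R) measurableSet_Icc hg, add_mul,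
    div_mul_eq_mul_div, mul_div_assoc]
  linarith

/-- If `A` is measurable with `0 ≤ A(q) ≤ ⟨q⟩^{-γ}` for some `γ > 1`, then
`∫ 2A(p)/(A(p)s+2) dp ≤ C (1+s)^{-(1-1/γ)}` for all `s ≥ 0`, for a constant `C = C(γ)`. -/
theorem stmt4 (γ : ℝ) (hγ : 1 < γ) :
    ∃ C : ℝ, 0 < C ∧ ∀ A : ℝ → ℝ, Measurable A →
      (∀ q, 0 ≤ A q ∧ A q ≤ Real.rpow (Real.sqrt (1 + q ^ 2)) (-γ)) →
      ∀ s : ℝ, 0 ≤ s →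
        (∫ p : ℝ, 2 * A p / (A p * s + 2))
          ≤ C * Real.rpow (1 + s) (-(1 - 1 / γ)) := by
  refine ⟨4 + 2 / (γ - 1), by have := sub_pos.2 hγ; positivity, fun A _ hA s hs ↦ ?_⟩
  have hA_le_min : ∀ p, 2 * A p / (A p * s + 2) ≤ min (2 / (s + 2)) (√(1 + p ^ 2) ^ (-γ)) :=
    fun p ↦ (two_mul_div_mul_add_two_le_min (hA p).1
      ((hA p).2.trans (sqrt_one_add_sq_rpow_neg_le_one p (by linarith))) hs).trans
      (min_le_min_left _ (hA p).2)
  calc ∫ p, 2 * A p / (A p * s + 2)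
      ≤ ∫ p, min (2 / (s + 2)) (√(1 + p ^ 2) ^ (-γ)) :=
        integral_mono_of_nonneg (.of_forall fun p ↦ by have := (hA p).1; positivity)
          (integrable_min_sqrt_one_add_sq_rpow_neg (by positivity) hγ) (.of_forall hA_le_min)
    _ ≤ _ := integral_min_sqrt_one_add_sq_rpow_neg_le hγ hs
end

section
/- Let β : [−q, ∞) → ℝ be C¹ with β(−q) = 0, β nonnegative and nondecreasing, and suppose β'(ρ) ≥ β(ρ)²/(4(R−q)²ρ) for all ρ ≥ r > 0, where R − q > 0. If β(r₁) > 0 for some r₁ ≥ r, then β blows up in finite ρ: there exists ρ* < ∞ such that β(ρ) → ∞ as ρ → ρ* (β cannot be extended as a finite C¹ function past ρ*). -/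
/-! If `β' ≥ w β²` with `w = W' ≥ 0` and `β(r₁) > 0`, then `β` stays positive and `1/β + W`
is nonincreasing (its derivative is `w − β'/β² ≤ 0`), so `W ≤ 1/β(r₁) + W(r₁)` on `[r₁, ∞)`.
Here `W(ρ) = log ρ / (4(R−q)²)` is unbounded, which is impossible. -/

open Set Filter

namespace Riccati

variable {f f' w W : ℝ → ℝ} {a : ℝ}

theorem monotoneOn_Ici_of_hasDerivAt_nonneg (hf : ∀ x ∈ Ici a, HasDerivAt f (f' x) x)
    (hf'₀ : ∀ x ∈ Ici a, 0 ≤ f' x) : MonotoneOn f (Ici a) :=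
  monotoneOn_of_hasDerivWithinAt_nonneg (convex_Ici a)
    (fun x hx => (hf x hx).continuousAt.continuousWithinAt)
    (fun x hx => (hf x (interior_subset hx)).hasDerivWithinAt)
    (fun x hx => hf'₀ x (interior_subset hx))

theorem antitoneOn_Ici_of_hasDerivAt_nonpos (hf : ∀ x ∈ Ici a, HasDerivAt f (f' x) x)
    (hf'₀ : ∀ x ∈ Ici a, f' x ≤ 0) : AntitoneOn f (Ici a) :=
  antitoneOn_of_hasDerivWithinAt_nonpos (convex_Ici a)
    (fun x hx => (hf x hx).continuousAt.continuousWithinAt)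
    (fun x hx => (hf x (interior_subset hx)).hasDerivWithinAt)
    (fun x hx => hf'₀ x (interior_subset hx))

section

variable (hf : ∀ x ∈ Ici a, HasDerivAt f (f' x) x)
  (hric : ∀ x ∈ Ici a, w x * f x ^ 2 ≤ f' x)
include hf hric

theorem pos_of_riccati_le (hw : ∀ x ∈ Ici a, 0 ≤ w x) (ha : 0 < f a) :
    ∀ x ∈ Ici a, 0 < f x := by
  have hmono : MonotoneOn f (Ici a) := monotoneOn_Ici_of_hasDerivAt_nonneg hf fun x hx =>
    (mul_nonneg (hw x hx) (sq_nonneg _)).trans (hric x hx)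
  exact fun x hx => ha.trans_le (hmono self_mem_Ici hx hx)

theorem antitoneOn_inv_add_of_riccati_le (hW : ∀ x ∈ Ici a, HasDerivAt W (w x) x)
    (hpos : ∀ x ∈ Ici a, 0 < f x) : AntitoneOn (fun x => (f x)⁻¹ + W x) (Ici a) := by
  refine antitoneOn_Ici_of_hasDerivAt_nonpos
    (fun x hx => ((hf x hx).inv (hpos x hx).ne').add (hW x hx)) fun x hx => ?_
  have hf2 : 0 < f x ^ 2 := pow_pos (hpos x hx) 2
  have : w x ≤ f' x / f x ^ 2 := (le_div_iff₀ hf2).2 (hric x hx)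
  rw [neg_div]
  linarith

theorem not_tendsto_atTop_of_riccati_le (hW : ∀ x ∈ Ici a, HasDerivAt W (w x) x)
    (hw : ∀ x ∈ Ici a, 0 ≤ w x) (ha : 0 < f a) : ¬ Tendsto W atTop atTop := by
  intro hWtop
  have hpos := pos_of_riccati_le hf hric hw ha
  have hanti := antitoneOn_inv_add_of_riccati_le hf hric hW hpos
  obtain ⟨x, hWx, hxa⟩ :=
    ((hWtop.eventually_gt_atTop ((f a)⁻¹ + W a)).and (eventually_ge_atTop a)).exists
  have hle : (f x)⁻¹ + W x ≤ (f a)⁻¹ + W a := hanti self_mem_Ici hxa hxa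
  have hinv : 0 < (f x)⁻¹ := inv_pos.2 (hpos x hxa)
  linarith

end

end Riccati

theorem stmt6_general (q R r r₁ : ℝ) (hr : 0 < r) (hRq : 0 < R - q) (hr₁ : r ≤ r₁)
    (β : ℝ → ℝ)
    (hderiv : ∀ ρ : ℝ, r ≤ ρ →
      HasDerivAt β (deriv β ρ) ρ ∧ (β ρ) ^ 2 / (4 * (R - q) ^ 2 * ρ) ≤ deriv β ρ)
    (hpos : 0 < β r₁) : False := by
  set c : ℝ := 1 / (4 * (R - q) ^ 2)
  have hc : 0 < c := by positivity
  have hxpos : ∀ x ∈ Ici r₁, 0 < x := fun x hx => hr.trans_le (hr₁.trans hx)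
  refine Riccati.not_tendsto_atTop_of_riccati_le (f := β) (w := fun x => c * x⁻¹)
    (fun x hx => (hderiv x (hr₁.trans hx)).1) (fun x hx => ?_)
    (fun x hx => (Real.hasDerivAt_log (hxpos x hx).ne').const_mul c)
    (fun x hx => by have := hxpos x hx; positivity) hpos
    (Real.tendsto_log_atTop.const_mul_atTop hc)
  convert (hderiv x (hr₁.trans hx)).2 using 1
  have := (hxpos x hx).ne'
  simp only [c]
  field_simp

/-- Fritz John's differential inequality: a nonnegative, nondecreasing `C¹` function `β`
on `[-q,∞)` with `β(-q) = 0`, satisfying `β'(ρ) ≥ β(ρ)²/(4(R−q)²ρ)` for all `ρ ≥ r > 0`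
(`R − q > 0`), which is positive at some `r₁ ≥ r`, cannot remain finite: no such globally
defined finite `C¹` function exists (it must blow up at some finite `ρ*`). -/
theorem stmt6 (q R r r₁ : ℝ) (hr : 0 < r) (hRq : 0 < R - q) (hr₁ : r ≤ r₁)
    (β : ℝ → ℝ) (hβ0 : β (-q) = 0)
    (hnonneg : ∀ ρ : ℝ, -q ≤ ρ → 0 ≤ β ρ)
    (hmono : MonotoneOn β (Set.Ici (-q)))
    (hderiv : ∀ ρ : ℝ, r ≤ ρ →
      HasDerivAt β (deriv β ρ) ρ ∧ (β ρ) ^ 2 / (4 * (R - q) ^ 2 * ρ) ≤ deriv β ρ)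
    (hpos : 0 < β r₁) : False :=
  stmt6_general q R r r₁ hr hRq hr₁ β hderiv hpos
end
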